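/- arXiv:2505.06555 — 2 statements merged into one kernel-verified Lean document; each statement's English description precedes it below -/
import Mathlib

section
/- Let U ⊆ ℍ be open, let p ∈ U with Im p ≠ 0, let f : U → ℍ be real-differentiable at p, and let n ∈ ℕ. Then the function x ↦ f(x)·xⁿ is real-differentiable at p and the right global operator satisfies V(x ↦ f(x)·xⁿ)(p) = (Vf)(p)·pⁿ. -/
noncomputable section
open Quaternion

/-- The imaginary units of `ℍ`. -/
def e1 : ℍ[ℝ] := ⟨0, 1, 0, 0⟩
def e2 : ℍ[ℝ] := ⟨0, 0, 1, 0⟩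
def e3 : ℍ[ℝ] := ⟨0, 0, 0, 1⟩

/-- The right global operator
`Vg(p) = ∂₀g(p) + (∑_{ℓ=1}^{3} p_ℓ ∂_ℓ g(p)) · (Im p)/|Im p|²`. -/
def Vop (g : ℍ[ℝ] → ℍ[ℝ]) (p : ℍ[ℝ]) : ℍ[ℝ] :=
  fderiv ℝ g p 1 +
    (p.imI • fderiv ℝ g p e1 + p.imJ • fderiv ℝ g p e2 + p.imK • fderiv ℝ g p e3) *
      ((‖Quaternion.im p‖ ^ 2)⁻¹ • Quaternion.im p)

lemma norm_im_sq (q : ℍ[ℝ]) : ‖Quaternion.im q‖ ^ 2 = q.imI^2 + q.imJ^2 + q.imK^2 := by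
  rw [sq, ← Quaternion.normSq_eq_norm_mul_self]
  simp [Quaternion.normSq_def']

lemma e1_re : e1.re = 0 := rfl
lemma e1_imI : e1.imI = 1 := rfl
lemma e1_imJ : e1.imJ = 0 := rfl
lemma e1_imK : e1.imK = 0 := rfl
lemma e2_re : e2.re = 0 := rfl
lemma e2_imI : e2.imI = 0 := rfl
lemma e2_imJ : e2.imJ = 1 := rfl
lemma e2_imK : e2.imK = 0 := rfl
lemma e3_re : e3.re = 0 := rfl
lemma e3_imI : e3.imI = 0 := rfl
lemma e3_imJ : e3.imJ = 0 := rfl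
lemma e3_imK : e3.imK = 1 := rfl

set_option maxHeartbeats 2000000 in
lemma alg_key (a b c d e q : ℍ[ℝ]) (hq : Quaternion.im q ≠ 0) :
    (a * 1 + b * q) +
      (q.imI • (a * e1 + c * q) + q.imJ • (a * e2 + d * q) + q.imK • (a * e3 + e * q)) *
        ((‖Quaternion.im q‖ ^ 2)⁻¹ • Quaternion.im q)
    = (b + (q.imI • c + q.imJ • d + q.imK • e) *
        ((‖Quaternion.im q‖ ^ 2)⁻¹ • Quaternion.im q)) * q := by
  have hne : q.imI^2 + q.imJ^2 + q.imK^2 ≠ 0 := by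
    rw [← norm_im_sq]; simpa using hq
  rw [norm_im_sq]
  ext <;>
    simp only [e1_re, e1_imI, e1_imJ, e1_imK, e2_re, e2_imI, e2_imJ, e2_imK, e3_re, e3_imI,
        e3_imJ, e3_imK, Quaternion.re_one, Quaternion.imI_one, Quaternion.imJ_one,
        Quaternion.imK_one, Quaternion.re_mul, Quaternion.imI_mul, Quaternion.imJ_mul,
      Quaternion.imK_mul, Quaternion.re_add, Quaternion.imI_add, Quaternion.imJ_add,
      Quaternion.imK_add, Quaternion.re_smul, Quaternion.imI_smul, Quaternion.imJ_smul,
      Quaternion.imK_smul, Quaternion.re_im, Quaternion.imI_im, Quaternion.imJ_im,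
      Quaternion.imK_im, smul_eq_mul] <;>
    field_simp <;>
    ring

/-- The right global operator `V` satisfies `V(f(x)·xⁿ)(p) = (Vf)(p)·pⁿ`. -/
theorem Vop_mul_pow (U : Set ℍ[ℝ]) (hU : IsOpen U) (p : ℍ[ℝ]) (hpU : p ∈ U)
    (hpim : Quaternion.im p ≠ 0) (f : ℍ[ℝ] → ℍ[ℝ]) (hf : DifferentiableAt ℝ f p) (n : ℕ) :
    DifferentiableAt ℝ (fun x => f x * x ^ n) p ∧
    Vop (fun x => f x * x ^ n) p = Vop f p * p ^ n := by
  induction n with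
  | zero =>
    constructor
    · simpa using hf
    · simp only [pow_zero, mul_one]
  | succ n ih =>
    obtain ⟨hd, hV⟩ := ih
    have heq : (fun x : ℍ[ℝ] => f x * x ^ (n + 1)) = fun x => (f x * x ^ n) * x := by
      funext x; rw [pow_succ, mul_assoc]
    set g : ℍ[ℝ] → ℍ[ℝ] := fun x => f x * x ^ n with hg
    have Hd : HasFDerivAt (fun x => g x * x)
        (g p • (ContinuousLinearMap.id ℝ ℍ[ℝ]) + (fderiv ℝ g p).smulRight p) p :=
      hd.hasFDerivAt.mul' (hasFDerivAt_id p)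
    rw [heq]
    refine ⟨Hd.differentiableAt, ?_⟩
    rw [show Vop (fun x => g x * x) p = Vop g p * p from ?_, hV, pow_succ, mul_assoc]
    rw [Vop, Vop, Hd.fderiv]
    simp only [ContinuousLinearMap.add_apply, ContinuousLinearMap.smul_apply,
      ContinuousLinearMap.id_apply, ContinuousLinearMap.smulRight_apply, smul_eq_mul]
    exact alg_key (g p) (fderiv ℝ g p 1) (fderiv ℝ g p e1) (fderiv ℝ g p e2)
      (fderiv ℝ g p e3) p hpim
end
end

section
/- Let p ∈ ℍ and q ∈ ℍ∖ℝ with q ∉ [p]. Set M := p² − 2(Re q)·p + |q|² (so M ≠ 0; note Re q̄ = Re q and |q̄| = |q|), let S(q) := (p − q̄)·M⁻¹ and S(q̄) := (p − q)·M⁻¹ (the left slice hyperholomorphic Cauchy kernel S_L⁻¹(p,·) at q and at q̄), and let ∂_{q₀}S(q) denote the derivative at t = 0 of the map t ↦ (p − conj(q+t))·(p² − 2·Re(q+t)·p + |q+t|²)⁻¹, t ∈ ℝ. Then: (i) M⁻¹ = −((Im q)⁻¹/2)·(S(q̄) − S(q)); (ii) the F-kernel F_L(p,q) := −4·(p − q̄)·M⁻²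 satisfies F_L(p,q) = −2·(Im q)⁻¹·∂_{q₀}S(q) − ((Im q)⁻¹)²·(S(q̄) − S(q)). -/
noncomputable section
open Quaternion

/-- The 2-sphere `[p] = {Re p + J·|Im p| : J ∈ 𝕊}` associated with `p ∈ ℍ`. -/
def sphereOf (p : ℍ[ℝ]) : Set ℍ[ℝ] :=
  {x | ∃ J : ℍ[ℝ], J.re = 0 ∧ ‖J‖ = 1 ∧ x = (p.re : ℍ[ℝ]) + ‖Quaternion.im p‖ • J}

private lemma quat_norm_sq (a : ℍ[ℝ]) : ‖a‖^2 = a.re^2 + a.imI^2 + a.imJ^2 + a.imK^2 := by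
  rw [sq, ← Quaternion.normSq_eq_norm_mul_self, Quaternion.normSq_def']

private lemma quat_norm_sq' (a : ℍ[ℝ]) :
    ‖a‖^2 = a.re*a.re + a.imI*a.imI + a.imJ*a.imJ + a.imK*a.imK := by
  rw [quat_norm_sq]; ring

private lemma two_re' : (2 : ℍ[ℝ]).re = 2 := rfl
private lemma two_imI' : (2 : ℍ[ℝ]).imI = 0 := rfl
private lemma two_imJ' : (2 : ℍ[ℝ]).imJ = 0 := rfl
private lemma two_imK' : (2 : ℍ[ℝ]).imK = 0 := rfl

/-- Value of the derivative of the slice Cauchy kernel in the real direction. -/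
private lemma deriv_val (p q M : ℍ[ℝ])
    (hM : M = p ^ 2 - 2 * (q.re : ℍ[ℝ]) * p + ((‖q‖ ^ 2 : ℝ) : ℍ[ℝ])) (hM0 : M ≠ 0) :
    deriv (fun t : ℝ => (p - star (q + (t : ℍ[ℝ]))) *
      (p ^ 2 - 2 * (((q + (t : ℍ[ℝ])).re : ℝ) : ℍ[ℝ]) * p +
        ((‖q + (t : ℍ[ℝ])‖ ^ 2 : ℝ) : ℍ[ℝ]))⁻¹) 0
    = (-1) * M⁻¹ + (p - star q) * (-(M⁻¹ * ((2:ℍ[ℝ]) * (q.re:ℍ[ℝ]) - 2 * p) * M⁻¹)) := by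
  set A : ℍ[ℝ] := p - star q with hA
  set B : ℍ[ℝ] := (2:ℍ[ℝ]) * (q.re:ℍ[ℝ]) - 2 * p with hB
  have hfun : (fun t : ℝ => (p - star (q + (t : ℍ[ℝ]))) *
      (p ^ 2 - 2 * (((q + (t : ℍ[ℝ])).re : ℝ) : ℍ[ℝ]) * p +
        ((‖q + (t : ℍ[ℝ])‖ ^ 2 : ℝ) : ℍ[ℝ]))⁻¹)
      = fun t : ℝ => (A - (t : ℍ[ℝ])) * ((M + (t : ℍ[ℝ]) * B + (t : ℍ[ℝ]) * (t : ℍ[ℝ]))⁻¹) := by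
    funext t
    have h1 : p - star (q + (t : ℍ[ℝ])) = A - (t : ℍ[ℝ]) := by
      rw [hA, star_add, show star ((t:ℝ) : ℍ[ℝ]) = ((t:ℝ) : ℍ[ℝ]) from Quaternion.star_coe t]
      abel
    have h2 : p ^ 2 - 2 * (((q + (t : ℍ[ℝ])).re : ℝ) : ℍ[ℝ]) * p +
        ((‖q + (t : ℍ[ℝ])‖ ^ 2 : ℝ) : ℍ[ℝ])
        = M + (t : ℍ[ℝ]) * B + (t : ℍ[ℝ]) * (t : ℍ[ℝ]) := by
      have hn : ‖q + (t : ℍ[ℝ])‖ ^ 2 = ‖q‖^2 + 2*q.re*t + t*t := by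
        rw [quat_norm_sq, quat_norm_sq]
        simp only [Quaternion.re_add, Quaternion.imI_add, Quaternion.imJ_add, Quaternion.imK_add,
          Quaternion.re_coe, Quaternion.imI_coe, Quaternion.imJ_coe, Quaternion.imK_coe]
        ring
      rw [hn, hM, hB, pow_two]
      ext <;>
        simp [Quaternion.re_mul, Quaternion.imI_mul, Quaternion.imJ_mul,
          Quaternion.imK_mul, Quaternion.re_coe, Quaternion.imI_coe, Quaternion.imJ_coe,
          Quaternion.imK_coe, two_re', two_imI', two_imJ', two_imK', quat_norm_sq'] <;>
        ring
    rw [h1, h2]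
  rw [hfun]
  have hone : HasDerivAt (fun t : ℝ => ((t:ℝ) : ℍ[ℝ])) 1 0 := by
    have h := (hasDerivAt_id (0:ℝ)).smul_const (1 : ℍ[ℝ])
    simp only [one_smul] at h
    convert h using 1
    all_goals try rfl
    funext t
    rw [← Quaternion.coe_mul_eq_smul, mul_one]
    rfl
  have hg : HasDerivAt (fun t : ℝ => M + (t : ℍ[ℝ]) * B + (t : ℍ[ℝ]) * (t : ℍ[ℝ])) B 0 := by
    have h1 : HasDerivAt (fun t : ℝ => (t : ℍ[ℝ]) * B) B 0 := by
      simpa using hone.mul_const B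
    have h2 := hone.mul hone
    have h3 : HasDerivAt (fun t : ℝ => M + (t : ℍ[ℝ]) * B + (t : ℍ[ℝ]) * (t : ℍ[ℝ])) (0 + B + (1 * ((0:ℝ) : ℍ[ℝ]) + ((0:ℝ) : ℍ[ℝ]) * 1)) 0 :=
      ((hasDerivAt_const (0:ℝ) M).add h1).add h2
    simpa using h3
  have hg0 : M + ((0:ℝ) : ℍ[ℝ]) * B + ((0:ℝ) : ℍ[ℝ]) * ((0:ℝ) : ℍ[ℝ]) = M := by simp
  have hinv : HasDerivAt (fun t : ℝ => (M + (t : ℍ[ℝ]) * B + (t : ℍ[ℝ]) * (t : ℍ[ℝ]))⁻¹)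
      (-(M⁻¹ * B * M⁻¹)) 0 := by
    have hl : HasFDerivAt Inv.inv
        (-(ContinuousLinearMap.mulLeftRight ℝ ℍ[ℝ] M⁻¹) M⁻¹)
        (M + ((0:ℝ) : ℍ[ℝ]) * B + ((0:ℝ) : ℍ[ℝ]) * ((0:ℝ) : ℍ[ℝ])) := by
      rw [hg0]; exact hasFDerivAt_inv' (𝕜 := ℝ) hM0
    have h := hl.comp_hasDerivAt 0 hg
    exact h
  have hf : HasDerivAt (fun t : ℝ => A - (t : ℍ[ℝ])) (-1) 0 := by
    have h3 : HasDerivAt (fun t : ℝ => A - (t : ℍ[ℝ])) (0 - 1) 0 := (hasDerivAt_const (0:ℝ) A).sub hone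
    simpa using h3
  have hd := hf.mul hinv
  have hd' : HasDerivAt (fun t : ℝ => (A - (t : ℍ[ℝ])) * (M + (t : ℍ[ℝ]) * B + (t : ℍ[ℝ]) * (t : ℍ[ℝ]))⁻¹)
      (-1 * (M + ((0:ℝ) : ℍ[ℝ]) * B + ((0:ℝ) : ℍ[ℝ]) * ((0:ℝ) : ℍ[ℝ]))⁻¹ + (A - ((0:ℝ) : ℍ[ℝ])) * -(M⁻¹ * B * M⁻¹)) 0 := hd
  rw [hd'.deriv]
  simp [hg0]

private lemma final_alg (A M m Iq i r p B : ℍ[ℝ])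
    (hm : M * m = 1) (hi : i * Iq = 1)
    (hmB : m * B = B * m)
    (hK : Iq * A = A * (p - r) - M)
    (hB : B = 2 * r - 2 * p) :
    (-4 : ℍ[ℝ]) * (A * (m * m)) =
      (-2 : ℍ[ℝ]) * (i * ((-1) * m + A * (-(m * B * m)))) - (i * i) * (((-2 : ℍ[ℝ]) * Iq) * m) := by
  have hKA : i * (A * (p - r)) = A + i * M := by
    have h1 : A * (p - r) = Iq * A + M := by rw [hK]; noncomm_ring
    rw [h1, mul_add, ← mul_assoc, hi, one_mul]
  calc (-4 : ℍ[ℝ]) * (A * (m * m))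
      = (4:ℍ[ℝ]) * (i * m) - (4:ℍ[ℝ]) * (A * (m*m)) - (4:ℍ[ℝ]) * ((i * (M * m)) * m) := by
        rw [hm]; noncomm_ring
    _ = (4:ℍ[ℝ]) * (i * m) - (4:ℍ[ℝ]) * ((A + i * M) * (m*m)) := by noncomm_ring
    _ = (4:ℍ[ℝ]) * (i * m) - (4:ℍ[ℝ]) * ((i * (A * (p - r))) * (m*m)) := by rw [hKA]
    _ = (2:ℍ[ℝ]) * (i * m) + (2:ℍ[ℝ]) * (i * ((A * B) * (m*m))) + (2:ℍ[ℝ]) * (i * m) := by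
        rw [hB]; noncomm_ring
    _ = (2:ℍ[ℝ]) * (i * m) + (2:ℍ[ℝ]) * (i * (A * ((B * m) * m)))
        + (2:ℍ[ℝ]) * (i * ((i * Iq) * m)) := by
        rw [hi]; noncomm_ring
    _ = (-2 : ℍ[ℝ]) * (i * ((-1) * m + A * (-(m * B * m)))) - (i * i) * (((-2 : ℍ[ℝ]) * Iq) * m) := by
        rw [← hmB]; noncomm_ring

set_option maxHeartbeats 1600000 in
/-- The pseudo-Cauchy kernel and the `F`-kernel written in terms of the slice
hyperholomorphic Cauchy kernel. -/
theorem pseudo_cauchy_and_F_kernel_via_slice_kernel (p q : ℍ[ℝ])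
    (hq : q ∉ sphereOf p) (hqr : Quaternion.im q ≠ 0)
    (M Sq Sqbar dS : ℍ[ℝ])
    (hM : M = p ^ 2 - 2 * (q.re : ℍ[ℝ]) * p + ((‖q‖ ^ 2 : ℝ) : ℍ[ℝ]))
    (hSq : Sq = (p - star q) * M⁻¹)
    (hSqbar : Sqbar = (p - q) * M⁻¹)
    (hdS : dS = deriv (fun t : ℝ => (p - star (q + (t : ℍ[ℝ]))) *
      (p ^ 2 - 2 * (((q + (t : ℍ[ℝ])).re : ℝ) : ℍ[ℝ]) * p +
        ((‖q + (t : ℍ[ℝ])‖ ^ 2 : ℝ) : ℍ[ℝ]))⁻¹) 0) :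
    M ≠ 0 ∧
    M⁻¹ = -((2 : ℝ)⁻¹ • (Quaternion.im q)⁻¹) * (Sqbar - Sq) ∧
    (-4 : ℝ) • ((p - star q) * (M ^ 2)⁻¹) =
      (-2 : ℝ) • ((Quaternion.im q)⁻¹ * dS) - ((Quaternion.im q)⁻¹) ^ 2 * (Sqbar - Sq) := by
  -- M ≠ 0
  have hM0 : M ≠ 0 := by
    rw [hM]
    intro h0
    rw [Quaternion.ext_iff] at h0
    simp only [Quaternion.re_sub, Quaternion.re_add, Quaternion.imI_sub, Quaternion.imI_add,
      Quaternion.imJ_sub, Quaternion.imJ_add, Quaternion.imK_sub, Quaternion.imK_add,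
      pow_two, Quaternion.re_mul, Quaternion.imI_mul, Quaternion.imJ_mul, Quaternion.imK_mul,
      Quaternion.re_coe, Quaternion.imI_coe, Quaternion.imJ_coe, Quaternion.imK_coe,
      Quaternion.re_zero, Quaternion.imI_zero, Quaternion.imJ_zero, Quaternion.imK_zero,
      two_re', two_imI', two_imJ', two_imK'] at h0
    obtain ⟨e0, e1, e2, e3⟩ := h0
    rw [show ‖q‖ * ‖q‖ = ‖q‖^2 by ring, quat_norm_sq q] at e0
    have him : 0 < q.imI^2 + q.imJ^2 + q.imK^2 := by
      have h : q.imI ≠ 0 ∨ q.imJ ≠ 0 ∨ q.imK ≠ 0 := by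
        by_contra hc
        push_neg at hc
        exact hqr (by ext <;> simp [hc.1, hc.2.1, hc.2.2])
      rcases h with h | h | h <;>
        nlinarith [pow_two_pos_of_ne_zero h, sq_nonneg q.imI, sq_nonneg q.imJ, sq_nonneg q.imK]
    by_cases ha : p.re = q.re
    · have hsq : q.imI^2 + q.imJ^2 + q.imK^2 = p.imI^2 + p.imJ^2 + p.imK^2 := by nlinarith [e0]
      have hnorm : ‖Quaternion.im p‖ = ‖Quaternion.im q‖ := by
        have h1 := quat_norm_sq (Quaternion.im p)
        have h2 := quat_norm_sq (Quaternion.im q)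
        simp only [Quaternion.re_im, Quaternion.imI_im, Quaternion.imJ_im, Quaternion.imK_im]
          at h1 h2
        nlinarith [norm_nonneg (Quaternion.im p), norm_nonneg (Quaternion.im q)]
      have hnq : ‖Quaternion.im q‖ ≠ 0 := norm_ne_zero_iff.mpr hqr
      refine hq ⟨‖Quaternion.im q‖⁻¹ • Quaternion.im q, by simp, ?_, ?_⟩
      · rw [norm_smul]
        simp [hnq]
      · rw [hnorm, smul_smul, mul_inv_cancel₀ hnq, one_smul, ha]
        exact (Quaternion.re_add_im q).symm
    · have hb : p.imI = 0 := by
        rcases mul_eq_zero.mp (show (p.re - q.re) * p.imI = 0 by linear_combination e1/2)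
          with h | h
        · exact absurd (by linarith [sub_eq_zero.mp h]) ha
        · exact h
      have hc : p.imJ = 0 := by
        rcases mul_eq_zero.mp (show (p.re - q.re) * p.imJ = 0 by linear_combination e2/2)
          with h | h
        · exact absurd (by linarith [sub_eq_zero.mp h]) ha
        · exact h
      have hd : p.imK = 0 := by
        rcases mul_eq_zero.mp (show (p.re - q.re) * p.imK = 0 by linear_combination e3/2)
          with h | h
        · exact absurd (by linarith [sub_eq_zero.mp h]) ha
        · exact h
      nlinarith [sq_nonneg (p.re - q.re), e0, hb, hc, hd]
  have hdiff : Sqbar - Sq = ((-2 : ℝ) • Quaternion.im q) * M⁻¹ := by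
    rw [hSq, hSqbar, show (-2 : ℝ) • Quaternion.im q = star q - q by
      ext <;> simp <;> ring]
    noncomm_ring
  have hIq0 : Quaternion.im q ≠ 0 := hqr
  have hi : (Quaternion.im q)⁻¹ * Quaternion.im q = 1 := inv_mul_cancel₀ hIq0
  refine ⟨hM0, ?_, ?_⟩
  · rw [hdiff, neg_mul, smul_mul_assoc, smul_mul_assoc, mul_smul_comm, smul_smul,
      show (2:ℝ)⁻¹ * (-2) = -1 by norm_num, neg_smul, one_smul, neg_neg,
      ← mul_assoc, hi, one_mul]
  · -- part (ii)
    have hdval : dS = (-1) * M⁻¹ +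
        (p - star q) * (-(M⁻¹ * ((2:ℍ[ℝ]) * (q.re:ℍ[ℝ]) - 2 * p) * M⁻¹)) := by
      rw [hdS]; exact deriv_val p q M hM hM0
    have hK : Quaternion.im q * (p - star q)
        = (p - star q) * (p - (q.re : ℍ[ℝ])) - M := by
      rw [hM, pow_two]
      ext <;>
        simp [Quaternion.re_mul, Quaternion.imI_mul, Quaternion.imJ_mul,
          Quaternion.imK_mul, Quaternion.re_coe, Quaternion.imI_coe, Quaternion.imJ_coe,
          Quaternion.imK_coe, two_re', two_imI', two_imJ', two_imK', quat_norm_sq'] <;>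
        ring
    have hMB : M * ((2:ℍ[ℝ]) * (q.re : ℍ[ℝ]) - 2 * p)
        = ((2:ℍ[ℝ]) * (q.re : ℍ[ℝ]) - 2 * p) * M := by
      rw [hM, pow_two]
      ext <;>
        simp [Quaternion.re_mul, Quaternion.imI_mul, Quaternion.imJ_mul,
          Quaternion.imK_mul, Quaternion.re_coe, Quaternion.imI_coe, Quaternion.imJ_coe,
          Quaternion.imK_coe, two_re', two_imI', two_imJ', two_imK', quat_norm_sq'] <;>
        ring
    have hmB : M⁻¹ * ((2:ℍ[ℝ]) * (q.re : ℍ[ℝ]) - 2 * p)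
        = ((2:ℍ[ℝ]) * (q.re : ℍ[ℝ]) - 2 * p) * M⁻¹ := by
      have c : Commute ((2:ℍ[ℝ]) * (q.re : ℍ[ℝ]) - 2 * p) M := hMB.symm
      exact (c.inv_right₀).eq.symm
    have hm : M * M⁻¹ = 1 := mul_inv_cancel₀ hM0
    have hsqinv : (M^2)⁻¹ = M⁻¹ * M⁻¹ := by rw [sq, mul_inv_rev]
    rw [hdval, hdiff, hsqinv, pow_two,
      show ((-4:ℝ) • ((p - star q) * (M⁻¹ * M⁻¹))) = (-4:ℍ[ℝ]) * ((p - star q) * (M⁻¹ * M⁻¹)) by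
        rw [show ((-4):ℍ[ℝ]) = (((-4:ℝ)):ℍ[ℝ]) by norm_cast, Quaternion.coe_mul_eq_smul],
      show ∀ x : ℍ[ℝ], (-2:ℝ) • x = (-2:ℍ[ℝ]) * x from fun x => by
        rw [show ((-2):ℍ[ℝ]) = (((-2:ℝ)):ℍ[ℝ]) by norm_cast, Quaternion.coe_mul_eq_smul],
      show ((-2 : ℝ) • Quaternion.im q) = (-2:ℍ[ℝ]) * Quaternion.im q by
        rw [show ((-2):ℍ[ℝ]) = (((-2:ℝ)):ℍ[ℝ]) by norm_cast, Quaternion.coe_mul_eq_smul]]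
    exact final_alg (p - star q) M M⁻¹ (Quaternion.im q) (Quaternion.im q)⁻¹
      (q.re : ℍ[ℝ]) p ((2:ℍ[ℝ]) * (q.re : ℍ[ℝ]) - 2 * p) hm hi hmB hK rfl
end
end
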